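/- Let R be a unital non-associative ring, I a set well-ordered by ≪, and Δ = {δ_i}_{i∈I} a commutative family of additive maps δ_i : R → R with δ_i(1) = 0, and let π^f_g be defined by π^f_g(r) = C(f,g)·δ^{f−g}(r) if g ≤ f and π^f_g = 0 otherwise. Then π satisfies (D5), i.e. π^f_g(rs) = Σ_{h ∈ ℕ^(I)} π^f_h(r)·π^h_g(s) for all f,g ∈ ℕ^(I) and all r,s ∈ R, if and only if every δ_i (i ∈ I) is a derivation on R, i.e. δ_i(rs) = δ_i(r)s + r δ_i(s) for all r,s ∈ R. -/

import Mathlib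

open scoped Classical

/-! Framework for the differential monoid ring `S = R[ℕ^(I); π]` associated with a
family `Δ = {δ_i}_{i ∈ I}` of additive maps `δ_i : R → R` with `δ_i(1) = 0`, where
`I` is well-ordered by `≪` (encoded as a `LinearOrder` with well-founded `<`).
Here `ℕ^(I)` is the additive monoid `I →₀ ℕ` of finitely supported functions, the
ring `S` is `(I →₀ ℕ) →₀ R` (with `Finsupp.single f r` representing `r x^f`), and
`π^f_g(r) = C(f,g)·δ^{f-g}(r)` for `g ≤ f` and `π^f_g = 0` otherwise. -/

/-- A two-sided ideal with respect to a (possibly non-associative, non-unital)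
multiplication `m` on an additive group `A`. -/
structure IsIdealWith {A : Type*} [AddCommGroup A] (m : A → A → A) (J : Set A) : Prop where
  zero_mem : (0 : A) ∈ J
  add_mem : ∀ {x y : A}, x ∈ J → y ∈ J → x + y ∈ J
  neg_mem : ∀ {x : A}, x ∈ J → -x ∈ J
  mul_mem_left : ∀ (r : A) {x : A}, x ∈ J → m r x ∈ J
  mul_mem_right : ∀ {x : A} (r : A), x ∈ J → m x r ∈ J

/-- The subset `F` of `A` is a field with respect to the multiplication `m` with
identity `one`. -/
def IsFieldWith {A : Type*} [AddCommGroup A] (m : A → A → A) (one : A) (F : Set A) : Prop :=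
  one ∈ F ∧ (∀ x ∈ F, ∀ y ∈ F, x + y ∈ F) ∧ (∀ x ∈ F, -x ∈ F) ∧
  (∀ x ∈ F, ∀ y ∈ F, m x y ∈ F) ∧ (∀ x ∈ F, ∀ y ∈ F, m x y = m y x) ∧
  (∀ x ∈ F, x ≠ 0 → ∃ y ∈ F, m x y = one ∧ m y x = one)

/-- `A` is simple w.r.t. the multiplication `m`: `{0}` and `A` are its only
two-sided ideals. -/
def SimpleWith {A : Type*} [AddCommGroup A] (m : A → A → A) : Prop :=
  ∀ J : Set A, IsIdealWith m J → J = {0} ∨ J = Set.univ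

/-- The center of `A` w.r.t. the multiplication `m`: elements commuting with all
elements whose associator with any two elements (in any position) vanishes. -/
def centerWith {A : Type*} [AddCommGroup A] (m : A → A → A) : Set A :=
  {u | (∀ v, m u v = m v u) ∧ (∀ v w, m (m u v) w = m u (m v w)) ∧
       (∀ v w, m (m v u) w = m v (m u w)) ∧ (∀ v w, m (m v w) u = m v (m w u))}

variable {R : Type*} [NonAssocRing R] {I : Type*} [LinearOrder I]

/-- `δ^f = δ_{i₁}^{f(i₁)} ∘ ⋯ ∘ δ_{iₘ}^{f(iₘ)}` where `i₁ ≪ ⋯ ≪ iₘ` is the support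
of `f` listed in increasing order. -/
def deltaPow (δ : I → R → R) (f : I →₀ ℕ) : R → R :=
  ((f.support.sort (· ≤ ·)).map fun i => (δ i)^[f i]).foldr (· ∘ ·) id

/-- `C(f,g) = ∏ᵢ binomial (f i) (g i)` (equal to `0` whenever `g ≰ f`). -/
def binomF (f g : I →₀ ℕ) : ℕ :=
  ∏ i ∈ f.support ∪ g.support, Nat.choose (f i) (g i)

/-- `π^f_g(r) = C(f,g)·δ^{f-g}(r)` for `g ≤ f`, and `π^f_g = 0` otherwise. -/
noncomputable def piN (δ : I → R → R) (f g : I →₀ ℕ) (r : R) : R :=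
  if g ≤ f then (binomF f g) • deltaPow δ (f - g) r else 0

/-- `R_Δ = ⋂ᵢ ker δᵢ`. -/
def RDelta (δ : I → R → R) : Set R := {r | ∀ i : I, δ i r = 0}

/-- `Δ` is a set of left kernel derivations: each `δᵢ` is left `R_Δ`-linear. -/
def LeftKernel (δ : I → R → R) : Prop :=
  ∀ i : I, ∀ s ∈ RDelta δ, ∀ r : R, δ i (s * r) = s * δ i r

/-- `Δ` is a set of right kernel derivations: each `δᵢ` is right `R_Δ`-linear. -/
def RightKernel (δ : I → R → R) : Prop :=
  ∀ i : I, ∀ r : R, ∀ s ∈ RDelta δ, δ i (r * s) = δ i r * s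

/-- `R` is `Δ`-simple: `{0}` and `R` are its only `Δ`-invariant ideals. -/
def DeltaSimple (δ : I → R → R) : Prop :=
  ∀ J : Set R, IsIdealWith (· * ·) J → (∀ i : I, ∀ r ∈ J, δ i r ∈ J) →
    J = {0} ∨ J = Set.univ

/-- The multiplication of the differential monoid ring `S = R[ℕ^(I); π]` on
`(I →₀ ℕ) →₀ R`: the biadditive extension of
`(r x^f)(s x^g) = Σ_h r π^f_h(s) x^{h+g}`. -/
noncomputable def mulN (δ : I → R → R) (u v : (I →₀ ℕ) →₀ R) : (I →₀ ℕ) →₀ R :=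
  u.sum fun f r => v.sum fun g s =>
    ∑ h ∈ Finset.Iic f, Finsupp.single (h + g) (r * piN δ f h s)

/-! Testing (D5) at `f = eᵢ`, `g = 0` gives exactly the Leibniz rule for `δᵢ`. Conversely, for
commuting derivations `δ^(f+g) = δ^f ∘ δ^g`, so adding one unit vector `eᵢ` at a time and using
Pascal's rule `C(g+eᵢ, k) = C(g, k) + C(g, k-eᵢ)` yields the multi-index Leibniz rule
`δ^f(rs) = Σ_{k ≤ f} C(f,k) δ^(f-k)(r) δ^k(s)`. Multiplying by `C(f,g)` and reindexing `h = k + g`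
with `C(f, k+g) C(k+g, g) = C(f, g) C(f-g, k)` turns it into (D5). -/

open Finset

theorem Finsupp.induction_add_single_one {ι : Type*} {motive : (ι →₀ ℕ) → Prop} (f : ι →₀ ℕ)
    (zero : motive 0) (add_single_one : ∀ f i, motive f → motive (f + .single i 1)) :
    motive f := by
  induction f using Finsupp.induction with
  | zero => exact zero
  | single_add i n f _ hn hf =>
    clear hn
    induction n with
    | zero => simpa using hf
    | succ n ih => rw [Finsupp.single_add, add_right_comm]; exact add_single_one _ i ih

theorem Finset.noncommProd_eq_prod_sort {α β : Type*} [LinearOrder α] [Monoid β] (s : Finset α)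
    (F : α → β) (comm) : s.noncommProd F comm = ((s.sort (· ≤ ·)).map F).prod := by
  rw [Finset.noncommProd, ← Multiset.noncommProd_coe]
  · congr 1
    rw [← Multiset.map_coe, Finset.sort_eq]
  · rw [← Multiset.map_coe, Finset.sort_eq]
    exact Finset.noncommProd_lemma s F comm

theorem binomF_eq_prod {f g : I →₀ ℕ} {s : Finset I} (hf : f.support ⊆ s) (hg : g.support ⊆ s) :
    binomF f g = ∏ j ∈ s, (f j).choose (g j) := by
  refine prod_subset (union_subset hf hg) fun j _ hj => ?_
  rw [mem_union, not_or, Finsupp.notMem_support_iff, Finsupp.notMem_support_iff] at hj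
  rw [hj.1, hj.2, Nat.choose_self]

theorem binomF_eq_zero_of_not_le {f g : I →₀ ℕ} (h : ¬ g ≤ f) : binomF f g = 0 := by
  obtain ⟨j, hj⟩ := not_forall.mp (mt Finsupp.le_def.mpr h)
  exact prod_eq_zero (mem_union_right _ (Finsupp.mem_support_iff.mpr (by omega)))
    (Nat.choose_eq_zero_of_lt (not_le.mp hj))

theorem binomF_self (f : I →₀ ℕ) : binomF f f = 1 := by
  simp [binomF]

theorem binomF_zero_right (f : I →₀ ℕ) : binomF f 0 = 1 := by
  simp [binomF]

theorem binomF_add_single_one (g k : I →₀ ℕ) (i : I) :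
    binomF (g + .single i 1) k =
      binomF g k + if .single i 1 ≤ k then binomF g (k - .single i 1) else 0 := by
  set e : I →₀ ℕ := .single i 1
  set s := insert i (g.support ∪ k.support)
  have hg : g.support ⊆ s := subset_union_left.trans (subset_insert _ _)
  have hk : k.support ⊆ s := subset_union_right.trans (subset_insert _ _)
  have he : e.support ⊆ s := Finsupp.support_single_subset.trans (by simp [s])
  have hi : i ∈ s := mem_insert_self _ _
  have off_i : ∀ j ∈ s.erase i, e j = 0 := fun j hj =>
    Finsupp.single_eq_of_ne (ne_of_mem_erase hj)
  rw [binomF_eq_prod (Finsupp.support_add.trans (union_subset hg he)) hk,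
    binomF_eq_prod hg hk, binomF_eq_prod hg ((Finsupp.support_tsub).trans hk),
    ← mul_prod_erase s _ hi, ← mul_prod_erase s _ hi, ← mul_prod_erase s _ hi,
    prod_congr rfl fun j hj => by rw [Finsupp.add_apply, off_i j hj, add_zero],
    prod_congr (f := fun j => (g j).choose ((k - e) j)) rfl fun j hj => by
      rw [Finsupp.tsub_apply, off_i j hj, tsub_zero],
    Finsupp.add_apply, Finsupp.tsub_apply, Finsupp.single_eq_same]
  cases hki : k i with
  | zero => rw [if_neg (by simp [e, Finsupp.single_le_iff, hki])]; simp
  | succ m =>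
    rw [if_pos (Finsupp.single_le_iff.mpr (by omega)), Nat.choose_succ_succ', add_mul,
      Nat.add_sub_cancel, add_comm]

theorem binomF_mul_binomF {f g k : I →₀ ℕ} (h : k + g ≤ f) :
    binomF f (k + g) * binomF (k + g) g = binomF f g * binomF (f - g) k := by
  have hg : g ≤ f := le_add_self.trans h
  have sub := fun {u : I →₀ ℕ} (hu : u ≤ f) => Finsupp.support_mono hu
  rw [binomF_eq_prod subset_rfl (sub h), binomF_eq_prod (sub h) (sub hg),
    binomF_eq_prod subset_rfl (sub hg),
    binomF_eq_prod (sub tsub_le_self) (sub (le_self_add.trans h)),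
    ← prod_mul_distrib, ← prod_mul_distrib]
  refine prod_congr rfl fun j _ => ?_
  rw [Finsupp.add_apply, Finsupp.tsub_apply, Nat.choose_mul (Nat.le_add_left _ _),
    Nat.add_sub_cancel]

theorem sum_Iic_eq_sum_Iic_tsub {M : Type*} [AddCommMonoid M] {f g : I →₀ ℕ} (hgf : g ≤ f)
    (F : (I →₀ ℕ) → M) (hF : ∀ h, ¬ g ≤ h → F h = 0) :
    ∑ h ∈ Iic f, F h = ∑ k ∈ Iic (f - g), F (k + g) := by
  rw [← sum_filter_of_ne fun h _ hne => not_not.mp (mt (hF h) hne)]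
  refine sum_nbij' (· - g) (· + g) (fun h hh => ?_) (fun k hk => ?_) (fun h hh => ?_)
    (fun k _ => add_tsub_cancel_right k g) (fun h hh => ?_)
  · exact mem_Iic.mpr (tsub_le_tsub_right (mem_Iic.mp (mem_filter.mp hh).1) g)
  · exact mem_filter.mpr
      ⟨mem_Iic.mpr ((le_tsub_iff_right hgf).mp (mem_Iic.mp hk)), le_add_self⟩
  · exact tsub_add_cancel_of_le (mem_filter.mp hh).2
  · rw [tsub_add_cancel_of_le (mem_filter.mp hh).2]

theorem Finsupp.Iic_single_one (i : I) : Iic (Finsupp.single i 1) = {0, Finsupp.single i 1} := by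
  ext h
  rw [mem_Iic, mem_insert, mem_singleton]
  refine ⟨fun hle => ?_, by rintro (rfl | rfl) <;> simp⟩
  obtain ⟨n, rfl⟩ := Finsupp.support_subset_singleton'.mp
    ((Finsupp.support_mono hle).trans Finsupp.support_single_subset)
  rw [Finsupp.single_le_single] at hle
  interval_cases n <;> simp

theorem sum_Iic_add_single_one_binomF_smul {M : Type*} [AddCommMonoid M] (φ : (I →₀ ℕ) → M)
    (g : I →₀ ℕ) (i : I) :
    ∑ k ∈ Iic (g + .single i 1), binomF (g + .single i 1) k • φ k =
      ∑ k ∈ Iic g, binomF g k • (φ k + φ (k + .single i 1)) := by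
  set e : I →₀ ℕ := .single i 1
  have unshifted :
      ∑ k ∈ Iic g, binomF g k • φ k = ∑ k ∈ Iic (g + e), binomF g k • φ k :=
    sum_subset (Iic_subset_Iic.mpr le_self_add) fun k _ hk => by
      rw [binomF_eq_zero_of_not_le (mt mem_Iic.mpr hk), zero_smul]
  have shifted : ∑ k ∈ Iic g, binomF g k • φ (k + e) =
      ∑ k ∈ Iic (g + e), (if e ≤ k then binomF g (k - e) else 0) • φ k := by
    rw [sum_Iic_eq_sum_Iic_tsub le_add_self _ fun k hk => by rw [if_neg hk, zero_smul],
      add_tsub_cancel_right]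
    exact sum_congr rfl fun k _ => by rw [if_pos le_add_self, add_tsub_cancel_right]
  rw [sum_congr rfl fun k _ => smul_add _ _ _, sum_add_distrib, unshifted, shifted,
    ← sum_add_distrib]
  exact sum_congr rfl fun k _ => by rw [binomF_add_single_one, add_smul]

section DeltaPow

variable (δ : I → R → R)

def deltaEnd (i : I) : Function.End R := δ i

omit [NonAssocRing R] in
theorem deltaPow_zero : deltaPow δ 0 = id := by
  simp [deltaPow]

omit [NonAssocRing R] in
theorem deltaPow_single_one (i : I) : deltaPow δ (.single i 1) = δ i := by
  simp [deltaPow]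

variable {δ} (hcomm : ∀ i j : I, δ i ∘ δ j = δ j ∘ δ i)
include hcomm

omit [NonAssocRing R] [LinearOrder I] in
theorem commute_deltaEnd (i j : I) : Commute (deltaEnd δ i) (deltaEnd δ j) := hcomm i j

omit [NonAssocRing R] [LinearOrder I] in
theorem pairwise_commute_deltaEnd_pow (f : I →₀ ℕ) (s : Finset I) :
    (s : Set I).Pairwise fun i j => Commute (deltaEnd δ i ^ f i) (deltaEnd δ j ^ f j) :=
  fun i _ j _ _ => (commute_deltaEnd hcomm i j).pow_pow _ _

omit [NonAssocRing R] in
theorem deltaPow_eq_noncommProd (f : I →₀ ℕ) {s : Finset I} (hs : f.support ⊆ s) :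
    deltaPow δ f =
      s.noncommProd (fun i => deltaEnd δ i ^ f i) (pairwise_commute_deltaEnd_pow hcomm f s) := by
  rw [← union_sdiff_of_subset hs, noncommProd_union_of_disjoint disjoint_sdiff,
    noncommProd_eq_pow_card (s \ f.support) _ _ 1 fun i hi => by
      rw [Finsupp.notMem_support_iff.mp (mem_sdiff.mp hi).2, pow_zero],
    one_pow, mul_one, Finset.noncommProd_eq_prod_sort, List.prod_eq_foldr]
  rfl

omit [NonAssocRing R] in
theorem deltaPow_add (f g : I →₀ ℕ) :
    deltaPow δ (f + g) = deltaPow δ f ∘ deltaPow δ g := by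
  have comm := pairwise_commute_deltaEnd_pow hcomm
  rw [deltaPow_eq_noncommProd hcomm (f + g) Finsupp.support_add,
    deltaPow_eq_noncommProd hcomm f subset_union_left,
    deltaPow_eq_noncommProd hcomm g subset_union_right]
  change @Eq (Function.End R) _ (_ * _)
  exact (noncommProd_congr rfl (fun i _ => pow_add _ _ _) _).trans
    (noncommProd_mul_distrib _ _ (comm f _) (comm g _)
      fun i _ j _ _ => (commute_deltaEnd hcomm i j).pow_pow _ _)

variable (hadd : ∀ (i : I) (r s : R), δ i (r + s) = δ i r + δ i s)
  (hder : ∀ (i : I) (r s : R), δ i (r * s) = δ i r * s + r * δ i s)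
include hadd hder

theorem deltaPow_mul (f : I →₀ ℕ) (r s : R) :
    deltaPow δ f (r * s) =
      ∑ k ∈ Iic f, binomF f k • (deltaPow δ (f - k) r * deltaPow δ k s) := by
  induction f using Finsupp.induction_add_single_one with
  | zero =>
    rw [show Iic (0 : I →₀ ℕ) = {0} from Iic_bot]
    simp [deltaPow_zero, binomF_zero_right]
  | add_single_one g i ih =>
    set e : I →₀ ℕ := .single i 1
    let D : R →+ R := AddMonoidHom.mk' (δ i) (hadd i)
    have shift (h : I →₀ ℕ) (x : R) : δ i (deltaPow δ h x) = deltaPow δ (h + e) x := by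
      rw [add_comm, deltaPow_add hcomm, deltaPow_single_one]
      rfl
    calc deltaPow δ (g + e) (r * s)
        = ∑ k ∈ Iic g, binomF g k • δ i (deltaPow δ (g - k) r * deltaPow δ k s) := by
          rw [← shift, ih]
          exact (map_sum D _ _).trans (sum_congr rfl fun k _ => map_nsmul D _ _)
      _ = ∑ k ∈ Iic g, binomF g k • (deltaPow δ (g + e - k) r * deltaPow δ k s +
            deltaPow δ (g + e - (k + e)) r * deltaPow δ (k + e) s) :=
          sum_congr rfl fun k hk => by
            rw [hder, shift, shift,
              tsub_add_eq_add_tsub (mem_Iic.mp hk), add_tsub_add_eq_tsub_right]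
      _ = _ := (sum_Iic_add_single_one_binomF_smul _ g i).symm

end DeltaPow

section PiN

variable {δ : I → R → R}

theorem piN_of_le {f g : I →₀ ℕ} (h : g ≤ f) (r : R) :
    piN δ f g r = binomF f g • deltaPow δ (f - g) r :=
  if_pos h

theorem piN_of_not_le {f g : I →₀ ℕ} (h : ¬ g ≤ f) (r : R) : piN δ f g r = 0 :=
  if_neg h

theorem piN_zero_right (f : I →₀ ℕ) (r : R) : piN δ f 0 r = deltaPow δ f r := by
  rw [piN_of_le (zero_le (a := f)), binomF_zero_right, tsub_zero, one_smul]

theorem piN_self (f : I →₀ ℕ) (r : R) : piN δ f f r = r := by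
  rw [piN_of_le le_rfl, binomF_self, tsub_self, deltaPow_zero, one_smul, id]

theorem piN_mul_eq_sum_of_derivation (hadd : ∀ (i : I) (r s : R), δ i (r + s) = δ i r + δ i s)
    (hcomm : ∀ i j : I, δ i ∘ δ j = δ j ∘ δ i)
    (hder : ∀ (i : I) (r s : R), δ i (r * s) = δ i r * s + r * δ i s)
    (f g : I →₀ ℕ) (r s : R) :
    piN δ f g (r * s) = ∑ h ∈ Iic f, piN δ f h r * piN δ h g s := by
  by_cases hgf : g ≤ f
  · rw [sum_Iic_eq_sum_Iic_tsub hgf _ fun h hgh => by rw [piN_of_not_le hgh, mul_zero],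
      piN_of_le hgf, deltaPow_mul hcomm hadd hder, smul_sum]
    refine sum_congr rfl fun k hk => ?_
    have hkg : k + g ≤ f := (le_tsub_iff_right hgf).mp (mem_Iic.mp hk)
    rw [piN_of_le hkg, piN_of_le le_add_self, add_tsub_cancel_right, smul_mul_smul_comm,
      binomF_mul_binomF hkg, mul_smul, tsub_add_eq_tsub_tsub_swap]
  · rw [piN_of_not_le hgf, eq_comm]
    exact sum_eq_zero fun h hh => by
      rw [piN_of_not_le (fun hgh => hgf (hgh.trans (mem_Iic.mp hh))), mul_zero]

end PiN

-- The paper's sum over all `h` reduces to `h ≤ f`, as `π^f_h = 0` otherwise.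
theorem stmt14_general {R : Type*} [NonAssocRing R] {I : Type*} [LinearOrder I]
    (δ : I → R → R)
    (hadd : ∀ (i : I) (r s : R), δ i (r + s) = δ i r + δ i s)
    (hcomm : ∀ i j : I, δ i ∘ δ j = δ j ∘ δ i) :
    (∀ (f g : I →₀ ℕ) (r s : R),
        piN δ f g (r * s) = ∑ h ∈ Finset.Iic f, piN δ f h r * piN δ h g s) ↔
    (∀ (i : I) (r s : R), δ i (r * s) = δ i r * s + r * δ i s) := by
  refine ⟨fun hD5 i r s => ?_, piN_mul_eq_sum_of_derivation hadd hcomm⟩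
  have h0e : (0 : I →₀ ℕ) ≠ .single i 1 := (Finsupp.single_ne_zero.mpr one_ne_zero).symm
  simpa only [Finsupp.Iic_single_one, sum_pair h0e, piN_self, piN_zero_right,
    deltaPow_single_one, deltaPow_zero, id] using hD5 (.single i 1) 0 r s

/-- For a commutative family `Δ` of additive maps with
`δᵢ(1) = 0`, the family `π` satisfies (D5) iff every `δᵢ` is a derivation on `R`.
(The sum `Σ_{h ∈ ℕ^(I)} π^f_h(r)·π^h_g(s)` reduces to a sum over `h ≤ f`,
since `π^f_h = 0` for `h ≰ f`.) -/
theorem stmt14 {R : Type*} [NonAssocRing R] {I : Type*} [LinearOrder I]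
    [WellFoundedLT I] (δ : I → R → R)
    (hadd : ∀ (i : I) (r s : R), δ i (r + s) = δ i r + δ i s)
    (h1 : ∀ i : I, δ i 1 = 0)
    (hcomm : ∀ i j : I, δ i ∘ δ j = δ j ∘ δ i) :
    (∀ (f g : I →₀ ℕ) (r s : R),
        piN δ f g (r * s) = ∑ h ∈ Finset.Iic f, piN δ f h r * piN δ h g s) ↔
    (∀ (i : I) (r s : R), δ i (r * s) = δ i r * s + r * δ i s) :=
  stmt14_general δ hadd hcomm
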